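/- Let β₁, β₂ > 0 and let g be an L-layer fully-connected Softplus network with parameter β₁, weights W^(1), …, W^(L) and biases b^(1), …, b^(L): a^(0)(x) = x and a^(l)(x) = sp_{β₁}(W^(l) a^(l−1)(x) + b^(l)) componentwise for l < L, with linear output a^(L)(x) = W^(L) a^(L−1)(x) + b^(L). Define the rescaled parameters W̃^(1) = (β₁/β₂) W^(1), W̃^(i) = W^(i) for 1 < i < L, W̃^(L) = (β₂/β₁) W^(L), b̃^(i) = (β₁/β₂) b^(i) for i < L, and b̃^(L) = b^(L). Then the network g̃ with parameters W̃, b̃ and Softplus parameter β₂ satisfies g̃(x) = g(x) for all inputs x ∈ ℝ^N. -/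

import Mathlib

/-- The Softplus function with parameter `β`. -/
noncomputable def softplusF (β t : ℝ) : ℝ := (1 / β) * Real.log (1 + Real.exp (β * t))

/-- Hidden activations of a fully-connected Softplus network with biases:
`a^(0)(x) = x`, `a^(l+1)(x) = sp_β(W^(l+1) a^(l)(x) + b^(l+1))` componentwise.
(Here `W l`, `b l` are the paper's `W^(l+1)`, `b^(l+1)`.) -/
noncomputable def hiddenAct (β : ℝ) (n : ℕ → ℕ)
    (W : ∀ l, Matrix (Fin (n (l + 1))) (Fin (n l)) ℝ)
    (b : ∀ l, Fin (n (l + 1)) → ℝ) :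
    ∀ l, (Fin (n 0) → ℝ) → Fin (n l) → ℝ
  | 0 => fun x => x
  | l + 1 => fun x i => softplusF β (((W l).mulVec (hiddenAct β n W b l x)) i + b l i)

/-- Output of the `L`-layer Softplus network with linear last layer:
`a^(L)(x) = W^(L) a^(L-1)(x) + b^(L)`. -/
noncomputable def netOut (β : ℝ) (n : ℕ → ℕ)
    (W : ∀ l, Matrix (Fin (n (l + 1))) (Fin (n l)) ℝ)
    (b : ∀ l, Fin (n (l + 1)) → ℝ) (L : ℕ)
    (x : Fin (n 0) → ℝ) : Fin (n (L - 1 + 1)) → ℝ :=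
  fun i => ((W (L - 1)).mulVec (hiddenAct β n W b (L - 1) x)) i + b (L - 1) i

lemma softplusF_scale (β₁ β₂ : ℝ) (h₁ : 0 < β₁) (h₂ : 0 < β₂) (t : ℝ) :
    softplusF β₂ ((β₁ / β₂) * t) = (β₁ / β₂) * softplusF β₁ t := by
  unfold softplusF
  have h : β₂ * (β₁ / β₂ * t) = β₁ * t := by field_simp
  rw [h]
  field_simp

/-- rescaling the weights and biases of a Softplus network with
parameter `β₁` as prescribed (`W̃^(1) = (β₁/β₂)W^(1)`, middle weights unchanged,
`W̃^(L) = (β₂/β₁)W^(L)`, `b̃^(i) = (β₁/β₂)b^(i)` for `i < L`, `b̃^(L) = b^(L)`)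
yields a Softplus network with parameter `β₂` computing the same function. -/
theorem softplus_network_beta_interchangeable
    (β₁ β₂ : ℝ) (h₁ : 0 < β₁) (h₂ : 0 < β₂)
    (n : ℕ → ℕ) (L : ℕ) (hL : 2 ≤ L)
    (W W' : ∀ l, Matrix (Fin (n (l + 1))) (Fin (n l)) ℝ)
    (b b' : ∀ l, Fin (n (l + 1)) → ℝ)
    (hW0 : W' 0 = (β₁ / β₂) • W 0)
    (hWmid : ∀ l, 0 < l → l < L - 1 → W' l = W l)
    (hWL : W' (L - 1) = (β₂ / β₁) • W (L - 1))
    (hb : ∀ l, l < L - 1 → b' l = (β₁ / β₂) • b l)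
    (hbL : b' (L - 1) = b (L - 1)) :
    ∀ x : Fin (n 0) → ℝ, netOut β₂ n W' b' L x = netOut β₁ n W b L x := by
  intro x
  set c := β₁ / β₂ with hc
  -- key: hidden activations are scaled by c
  have key : ∀ l, 1 ≤ l → l ≤ L - 1 →
      hiddenAct β₂ n W' b' l x = c • hiddenAct β₁ n W b l x := by
    intro l
    induction l with
    | zero => intro h; omega
    | succ m ih =>
      intro _ hle
      funext i
      show softplusF β₂ (((W' m).mulVec (hiddenAct β₂ n W' b' m x)) i + b' m i) = _
      have hmlt : m < L - 1 := by omega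
      have hbm := hb m hmlt
      have harg : ((W' m).mulVec (hiddenAct β₂ n W' b' m x)) i + b' m i
          = c * (((W m).mulVec (hiddenAct β₁ n W b m x)) i + b m i) := by
        rcases Nat.eq_zero_or_pos m with hm0 | hmpos
        · subst hm0
          have : hiddenAct β₂ n W' b' 0 x = hiddenAct β₁ n W b 0 x := rfl
          rw [this, hW0, hbm, Matrix.smul_mulVec]
          simp [mul_add]
        · have hWm := hWmid m hmpos hmlt
          rw [hWm, ih hmpos (by omega), hbm, Matrix.mulVec_smul]
          simp [mul_add]
      rw [harg, softplusF_scale β₁ β₂ h₁ h₂]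
      rfl
  have hkey := key (L - 1) (by omega) le_rfl
  funext i
  show ((W' (L - 1)).mulVec (hiddenAct β₂ n W' b' (L - 1) x)) i + b' (L - 1) i = _
  rw [hkey, hWL, hbL, Matrix.smul_mulVec, Matrix.mulVec_smul]
  have : (β₂ / β₁) • c • (W (L - 1)).mulVec (hiddenAct β₁ n W b (L - 1) x)
      = (W (L - 1)).mulVec (hiddenAct β₁ n W b (L - 1) x) := by
    rw [smul_smul, hc]
    have : β₂ / β₁ * (β₁ / β₂) = 1 := by field_simp
    rw [this, one_smul]
  rw [this]
  rfl
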